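/- arXiv:2405.08664 — 2 statements merged into one kernel-verified Lean document; each statement's English description precedes it below -/
import Mathlib

section
/- For all x > 0, ∫_0^∞ e^{−x^2 y/2} √(1 + y/x) · dy/√(2π y) ≤ 1/x + 1/x^4. -/
/-!
Bounding `√(1 + y/x) ≤ 1 + y/x` splits the integrand into the Gamma-type integrands
`e^{-by} y^{-1/2}` and `e^{-by} y^{1/2}/x` with `b = x²/2`. Their integrals are `Γ(1/2) b^{-1/2}`
and `Γ(3/2) b^{-3/2}/x`, i.e. `√(2π)/x` and `√(2π)/x⁴`, so after dividing by `√(2π)` the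
upper bound is exactly `1/x + 1/x⁴`.
-/

open MeasureTheory Real Set

lemma integrableOn_rpow_mul_exp_neg_mul {s b : ℝ} (hs : -1 < s) (hb : 0 < b) :
    IntegrableOn (fun y : ℝ => y ^ s * exp (-(b * y))) (Ioi 0) := by
  simpa [rpow_one] using integrableOn_rpow_mul_exp_neg_mul_rpow hs one_pos hb

section GammaHalf

variable {b : ℝ}

lemma integrableOn_exp_neg_mul_div_sqrt (hb : 0 < b) :
    IntegrableOn (fun y : ℝ => exp (-(b * y)) / √y) (Ioi 0) := by
  refine (integrableOn_rpow_mul_exp_neg_mul (s := -(1 / 2)) (by norm_num) hb).congr_fun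
    (fun y hy => ?_) measurableSet_Ioi
  dsimp only
  rw [rpow_neg (le_of_lt hy), ← sqrt_eq_rpow, div_eq_inv_mul]

lemma integrableOn_sqrt_mul_exp_neg_mul (hb : 0 < b) :
    IntegrableOn (fun y : ℝ => √y * exp (-(b * y))) (Ioi 0) := by
  refine (integrableOn_rpow_mul_exp_neg_mul (s := 1 / 2) (by norm_num) hb).congr_fun
    (fun y _ => ?_) measurableSet_Ioi
  dsimp only
  rw [← sqrt_eq_rpow]

lemma integral_exp_neg_mul_div_sqrt (hb : 0 < b) :
    ∫ y in Ioi 0, exp (-(b * y)) / √y = √(π / b) := by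
  calc ∫ y in Ioi 0, exp (-(b * y)) / √y
      = ∫ y in Ioi 0, y ^ ((1 / 2 : ℝ) - 1) * exp (-(b * y)) :=
        setIntegral_congr_fun measurableSet_Ioi fun y hy => by
          rw [show (1 / 2 : ℝ) - 1 = -(1 / 2) by norm_num, rpow_neg (le_of_lt hy),
            ← sqrt_eq_rpow, div_eq_inv_mul]
    _ = (1 / b) ^ (1 / 2 : ℝ) * Gamma (1 / 2) := integral_rpow_mul_exp_neg_mul_Ioi (by norm_num) hb
    _ = √(π / b) := by
      rw [Gamma_one_half_eq, ← sqrt_eq_rpow, ← sqrt_mul (by positivity), one_div_mul_eq_div]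

lemma integral_sqrt_mul_exp_neg_mul (hb : 0 < b) :
    ∫ y in Ioi 0, √y * exp (-(b * y)) = √(π / b) / (2 * b) := by
  calc ∫ y in Ioi 0, √y * exp (-(b * y))
      = ∫ y in Ioi 0, y ^ ((3 / 2 : ℝ) - 1) * exp (-(b * y)) :=
        setIntegral_congr_fun measurableSet_Ioi fun y _ => by
          rw [show (3 / 2 : ℝ) - 1 = 1 / 2 by norm_num, ← sqrt_eq_rpow]
    _ = (1 / b) ^ (3 / 2 : ℝ) * Gamma (1 / 2 + 1) := by
      rw [integral_rpow_mul_exp_neg_mul_Ioi (by norm_num) hb]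
      norm_num
    _ = √(π / b) / (2 * b) := by
      rw [Gamma_add_one (by norm_num), Gamma_one_half_eq,
        show (3 / 2 : ℝ) = 1 / 2 + 1 by norm_num, rpow_add (by positivity), rpow_one,
        ← sqrt_eq_rpow, sqrt_div' _ hb.le, sqrt_div' _ hb.le, sqrt_one]
      field_simp

end GammaHalf

lemma exp_mul_sqrt_one_add_div_sqrt_le {x y : ℝ} (hx : 0 < x) (hy : 0 < y) :
    exp (-x ^ 2 * y / 2) * √(1 + y / x) / √(2 * π * y) ≤
      (exp (-(x ^ 2 / 2 * y)) / √y + x⁻¹ * (√y * exp (-(x ^ 2 / 2 * y)))) / √(2 * π) := by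
  have hsqrt : √(1 + y / x) ≤ 1 + y / x :=
    sqrt_le_self_iff.2 (Or.inr (le_add_of_nonneg_right (div_pos hy hx).le))
  calc exp (-x ^ 2 * y / 2) * √(1 + y / x) / √(2 * π * y)
      ≤ exp (-x ^ 2 * y / 2) * (1 + y / x) / √(2 * π * y) := by gcongr
    _ = _ := by
      rw [show -x ^ 2 * y / 2 = -(x ^ 2 / 2 * y) by ring, sqrt_mul (by positivity)]
      field_simp
      rw [sq_sqrt hy.le]

/-- For `x > 0`,
`∫_0^∞ e^{-x²y/2} √(1+y/x) dy/√(2πy) ≤ 1/x + 1/x⁴`. -/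
theorem integral_J1_bound (x : ℝ) (hx : 0 < x) :
    (∫ y in Set.Ioi (0 : ℝ),
        Real.exp (-x ^ 2 * y / 2) * Real.sqrt (1 + y / x) /
          Real.sqrt (2 * Real.pi * y)) ≤ 1 / x + 1 / x ^ 4 := by
  have hb : 0 < x ^ 2 / 2 := by positivity
  have hint₁ := integrableOn_exp_neg_mul_div_sqrt hb
  have hint₂ := (integrableOn_sqrt_mul_exp_neg_mul hb).const_mul x⁻¹
  have hsqrt : √(π / (x ^ 2 / 2)) = √(2 * π) / x := by
    rw [show π / (x ^ 2 / 2) = 2 * π / x ^ 2 by field_simp, sqrt_div' _ (sq_nonneg x),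
      sqrt_sq hx.le]
  calc _ ≤ ∫ y in Ioi 0, (exp (-(x ^ 2 / 2 * y)) / √y +
          x⁻¹ * (√y * exp (-(x ^ 2 / 2 * y)))) / √(2 * π) := by
        refine integral_mono_of_nonneg (.of_forall fun y => by positivity)
          ((hint₁.add hint₂).div_const _) ?_
        exact (ae_restrict_iff' measurableSet_Ioi).2
          (.of_forall fun y hy => exp_mul_sqrt_one_add_div_sqrt_le hx hy)
    _ = 1 / x + 1 / x ^ 4 := by
      rw [integral_div, integral_add hint₁ hint₂, integral_const_mul,
        integral_exp_neg_mul_div_sqrt hb, integral_sqrt_mul_exp_neg_mul hb, hsqrt]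
      field_simp
end

section
/- Comparison of an under-solution with an over-solution along a one-sided derivative: let t_0 ∈ ℝ, let u : [t_0,∞) → ℝ be nondecreasing with left limits and left/right derivatives, let u_2 : [t_0,∞) → ℝ be C^1, and let f : [t_0,∞) × ℝ → ℝ be strictly decreasing in its second variable. Assume u_2(t_0) < u(t_0), u_2'(t) < f(t, u_2(t)) for all t, and ∂_- u(t) ≥ f(t, u(t−)) for all t > t_0. Then u_2(t) < u(t) for all t ≥ t_0. -/
open Set Filter Topology

/-!
Argue at the first time `s` at which `u` fails to stay above `u₂`. Monotonicity of `u` and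
continuity of `u₂` force `u s ≤ u₂ s`, and `u₂ < u` before `s`, so `s > t₀` and the left limit
of `u` at `s` is `u₂ s`. Comparing left difference quotients at `s` then gives
`f(s, u₂ s) = f(s, u(s−)) ≤ ∂₋u(s) ≤ u₂'(s) < f(s, u₂ s)`.
-/

theorem exists_first_crossing {α β : Type*} [ConditionallyCompleteLinearOrder α]
    [TopologicalSpace α] [OrderTopology α] [LinearOrder β] [TopologicalSpace β]
    [OrderClosedTopology β] {u v : α → β} {t₀ t₁ : α} (hu : MonotoneOn u (Ici t₀))
    (hv : Continuous v) (h₀ : v t₀ < u t₀) (ht₁ : t₀ ≤ t₁) (h₁ : u t₁ ≤ v t₁) :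
    ∃ s, t₀ < s ∧ u s ≤ v s ∧ ∀ t ∈ Ico t₀ s, v t < u t := by
  set S := {t | t₀ ≤ t ∧ u t ≤ v t}
  have hS : S.Nonempty := ⟨t₁, ht₁, h₁⟩
  have hglb : IsGLB S (sInf S) := isGLB_csInf hS ⟨t₀, fun t ht => ht.1⟩
  have hs₀ : t₀ ≤ sInf S := hglb.2 fun t ht => ht.1
  have hcross : u (sInf S) ≤ v (sInf S) := by
    by_contra! hlt
    obtain ⟨t, hvt, htS⟩ :=
      ((hv.continuousAt.eventually_lt_const hlt).and_frequently
        (hglb.frequently_nhds_mem hS)).exists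
    have hut : u (sInf S) ≤ u t := hu hs₀ htS.1 (hglb.1 htS)
    exact (hut.trans htS.2).not_gt hvt
  refine ⟨sInf S, hs₀.lt_of_ne ?_, hcross, fun t ht => ?_⟩
  · intro h
    rw [← h] at hcross
    exact hcross.not_gt h₀
  · by_contra! h
    exact ht.2.not_ge (hglb.1 ⟨ht.1, h⟩)

theorem leftLim_eq_of_first_crossing {β : Type*} [LinearOrder β] [TopologicalSpace β]
    [OrderClosedTopology β] {u v : ℝ → β} {t₀ s : ℝ} {L : β} (hs₀ : t₀ < s)
    (hu : MonotoneOn u (Ici t₀)) (hv : ContinuousWithinAt v (Iio s) s)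
    (hL : Tendsto u (𝓝[<] s) (𝓝 L)) (hcross : u s ≤ v s)
    (hbefore : ∀ t ∈ Ico t₀ s, v t < u t) : L = v s := by
  have hIoo : Ioo t₀ s ∈ 𝓝[<] s := Ioo_mem_nhdsLT hs₀
  have hvL : v s ≤ L := le_of_tendsto_of_tendsto hv hL <| by
    filter_upwards [hIoo] with t ht
    exact (hbefore t ⟨ht.1.le, ht.2⟩).le
  have hLu : L ≤ u s := le_of_tendsto hL <| by
    filter_upwards [hIoo] with t ht
    exact hu ht.1.le hs₀.le ht.2.le
  exact le_antisymm (hLu.trans hcross) hvL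

theorem HasDerivAt.le_of_tendsto_slope_left_of_le {u v : ℝ → ℝ} {s d D : ℝ}
    (hv : HasDerivAt v d s)
    (hD : Tendsto (fun h => (u (s + h) - v s) / h) (𝓝[<] 0) (𝓝 D))
    (hle : ∀ᶠ t in 𝓝[<] s, v t ≤ u t) : D ≤ d := by
  have hv' : Tendsto (fun h => (v (s + h) - v s) / h) (𝓝[<] 0) (𝓝 d) := by
    simpa only [smul_eq_mul, inv_mul_eq_div] using hv.tendsto_slope_zero_left
  have hshift : Tendsto (s + ·) (𝓝[<] 0) (𝓝[<] s) := by
    refine tendsto_nhdsWithin_iff.2 ⟨?_, eventually_nhdsWithin_of_forall fun h (hh : h < 0) => ?_⟩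
    · simpa using ((continuous_const_add s).tendsto 0).mono_left nhdsWithin_le_nhds
    · exact add_lt_iff_neg_left.2 hh
  refine le_of_tendsto_of_tendsto hD hv' ?_
  filter_upwards [hshift.eventually hle, self_mem_nhdsWithin] with h hvu (hh : h < 0)
  exact div_le_div_of_nonpos_of_le hh.le (sub_le_sub_right hvu _)

theorem undersolution_comparison_general (t₀ : ℝ) (u u₂ uL Du : ℝ → ℝ) (f : ℝ → ℝ → ℝ)
    (hu_mono : MonotoneOn u (Ici t₀))
    (huL : ∀ t, t₀ < t → Tendsto u (nhdsWithin t (Iio t)) (nhds (uL t)))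
    (hDu : ∀ t, t₀ < t →
      Tendsto (fun h : ℝ => (u (t + h) - uL t) / h)
        (nhdsWithin 0 (Iio 0)) (nhds (Du t)))
    (hu₂ : ContDiff ℝ 1 u₂)
    (h₀ : u₂ t₀ < u t₀)
    (hsub : ∀ t, t₀ ≤ t → deriv u₂ t < f t (u₂ t))
    (hsup : ∀ t, t₀ < t → f t (uL t) ≤ Du t) :
    ∀ t, t₀ ≤ t → u₂ t < u t := by
  intro t ht
  by_contra! hcon
  obtain ⟨s, hs₀, hcross, hbefore⟩ := exists_first_crossing hu_mono hu₂.continuous h₀ ht hcon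
  have huLs : uL s = u₂ s := leftLim_eq_of_first_crossing hs₀ hu_mono
    hu₂.continuous.continuousWithinAt (huL s hs₀) hcross hbefore
  have hDu_le : Du s ≤ deriv u₂ s :=
    (hu₂.differentiable one_ne_zero s).hasDerivAt.le_of_tendsto_slope_left_of_le
      (huLs ▸ hDu s hs₀) <| by
        filter_upwards [Ioo_mem_nhdsLT hs₀] with t ht
        exact (hbefore t ⟨ht.1.le, ht.2⟩).le
  have hsup_s := hsup s hs₀
  rw [huLs] at hsup_s
  linarith [hsub s hs₀.le]

/-- Comparison of an under-solution `u₂` with an over-solution `u` along a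
left derivative: if `u` is nondecreasing on `[t₀,∞)` with left limits `uL` and
left derivatives `Du`, `u₂` is C¹, `f` is strictly decreasing in its second
variable, `u₂ t₀ < u t₀`, `u₂' (t) < f(t, u₂ t)` for all `t ≥ t₀` and
`Du t ≥ f(t, uL t)` for all `t > t₀`, then `u₂ t < u t` for all `t ≥ t₀`. -/
theorem undersolution_comparison (t₀ : ℝ) (u u₂ uL Du : ℝ → ℝ) (f : ℝ → ℝ → ℝ)
    (hu_mono : MonotoneOn u (Ici t₀))
    (huL : ∀ t, t₀ < t → Tendsto u (nhdsWithin t (Iio t)) (nhds (uL t)))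
    (hDu : ∀ t, t₀ < t →
      Tendsto (fun h : ℝ => (u (t + h) - uL t) / h)
        (nhdsWithin 0 (Iio 0)) (nhds (Du t)))
    (hu₂ : ContDiff ℝ 1 u₂)
    (hf : ∀ t a b : ℝ, a < b → f t b < f t a)
    (h₀ : u₂ t₀ < u t₀)
    (hsub : ∀ t, t₀ ≤ t → deriv u₂ t < f t (u₂ t))
    (hsup : ∀ t, t₀ < t → f t (uL t) ≤ Du t) :
    ∀ t, t₀ ≤ t → u₂ t < u t :=
  undersolution_comparison_general t₀ u u₂ uL Du f hu_mono huL hDu hu₂ h₀ hsub hsup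
end
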